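/- arXiv:2412.05008 — 2 statements merged into one kernel-verified Lean document; each statement's English description precedes it below -/
import Mathlib

section
/- Let A be a unital C*-algebra, H a complex Hilbert space, P ∈ B(H) positive, ψ a pure state on A, and define Φ : A → B(H) by Φ(a) = ψ(a)·P. Then Φ is both a P-C*-extreme point and a linear extreme point of CP^{(P)}(A,B(H)). -/
open scoped ComplexOrder

noncomputable section

section Defs

variable {A H : Type*}
variable [NormedAddCommGroup H] [InnerProductSpace ℂ H]

/-- An operator on a complex inner product space is positive:
`0 ≤ ⟪x, T x⟫` for all `x`. -/
def IsPosOp (T : H →L[ℂ] H) : Prop := ∀ x : H, 0 ≤ (inner ℂ x (T x) : ℂ)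

variable [Ring A] [StarRing A] [Algebra ℂ A]

/-- Complete positivity of a linear map `Φ : A → B(H)`:
`∑_{i,j} ⟪h i, Φ(a i* a j) (h j)⟫ ≥ 0` for all finite families. -/
def IsCPMap (Φ : A →ₗ[ℂ] (H →L[ℂ] H)) : Prop :=
  ∀ (n : ℕ) (a : Fin n → A) (h : Fin n → H),
    0 ≤ ∑ i, ∑ j, (inner ℂ (h i) ((Φ (star (a i) * a j)) (h j)) : ℂ)

/-- `CP^{(P)}(A, B(H))`: the CP maps `Φ` with `Φ 1 = P`. -/
def CPP (P : H →L[ℂ] H) : Set (A →ₗ[ℂ] (H →L[ℂ] H)) := {Φ | IsCPMap Φ ∧ Φ 1 = P}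

/-- `CCP(A, B(H))`: the contractive CP maps, i.e. CP maps with `Φ 1 ≤ 1`. -/
def CCPmaps : Set (A →ₗ[ℂ] (H →L[ℂ] H)) := {Φ | IsCPMap Φ ∧ IsPosOp (1 - Φ 1)}

variable [CompleteSpace H]

/-- `Ad_T : X ↦ T* X T`, as a linear map on `B(H)`. -/
def conjAd (T : H →L[ℂ] H) : (H →L[ℂ] H) →ₗ[ℂ] (H →L[ℂ] H) where
  toFun X := star T * X * T
  map_add' X Y := by simp [add_mul, mul_add]
  map_smul' c X := by simp [mul_smul_comm, smul_mul_assoc]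

/-- `Φ ∈ CP^{(P)}` is a `P`-`C*`-extreme point of `CP^{(P)}(A, B(H))`:
whenever `Φ = ∑ Ad_{T j} ∘ Φs j` is a proper `P`-`C*`-convex combination of members of
`CP^{(P)}`, each `Φs j` equals `Ad_{S j} ∘ Φ` for some invertible `S j`. -/
def IsPCExtreme (P : H →L[ℂ] H) (Φ : A →ₗ[ℂ] (H →L[ℂ] H)) : Prop :=
  Φ ∈ CPP (A := A) P ∧
  ∀ (n : ℕ) (T : Fin n → (H →L[ℂ] H)) (Φs : Fin n → (A →ₗ[ℂ] (H →L[ℂ] H))),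
    (∀ j, IsUnit (T j)) → (∀ j, Φs j ∈ CPP (A := A) P) →
    (∑ j, star (T j) * P * T j) = P →
    Φ = ∑ j, (conjAd (T j)).comp (Φs j) →
    ∀ j, ∃ S : H →L[ℂ] H, IsUnit S ∧ Φs j = (conjAd S).comp Φ

/-- `Φ ∈ C` is a `C*`-extreme point of the `C*`-convex set `C`:
whenever `Φ = ∑ Ad_{T j} ∘ Φs j` is a proper `C*`-convex combination of members of `C`,
each `Φs j` is unitarily equivalent to `Φ`. -/
def IsCstarExtreme (C : Set (A →ₗ[ℂ] (H →L[ℂ] H))) (Φ : A →ₗ[ℂ] (H →L[ℂ] H)) : Prop :=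
  Φ ∈ C ∧
  ∀ (n : ℕ) (T : Fin n → (H →L[ℂ] H)) (Φs : Fin n → (A →ₗ[ℂ] (H →L[ℂ] H))),
    (∀ j, IsUnit (T j)) → (∀ j, Φs j ∈ C) →
    (∑ j, star (T j) * T j) = 1 →
    Φ = ∑ j, (conjAd (T j)).comp (Φs j) →
    ∀ j, ∃ U : H →L[ℂ] H, U ∈ unitary (H →L[ℂ] H) ∧ Φs j = (conjAd U).comp Φ

/-- `Φ ∈ C` is a linear extreme point of the convex set `C`. -/
def IsLinExtreme (C : Set (A →ₗ[ℂ] (H →L[ℂ] H))) (Φ : A →ₗ[ℂ] (H →L[ℂ] H)) : Prop :=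
  Φ ∈ C ∧
  ∀ (n : ℕ) (t : Fin n → ℝ) (Φs : Fin n → (A →ₗ[ℂ] (H →L[ℂ] H))),
    (∀ j, 0 < t j ∧ t j < 1) → (∀ j, Φs j ∈ C) → (∑ j, t j) = 1 →
    Φ = ∑ j, (t j : ℂ) • Φs j →
    ∀ j, Φs j = Φ

end Defs

/-!
Let `Φ = ψ(·) P`. If `Ψ` and `Φ - Ψ` are both completely positive, then for every vector `x` the
positive functional `b ↦ ⟪x, Ψ b x⟫` is dominated by `⟪x, P x⟫ ψ`, so purity of `ψ` makes it a
multiple of `ψ`, and polarization gives `Ψ = ψ(·) Ψ 1`. In a decomposition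
`Φ = ∑ Ad_{T j} ∘ Φs j` (resp. `Φ = ∑ t j • Φs j`) every summand is such a `Ψ`, with
`Ψ 1 = Ad_{T j} P` (resp. `t j • P`); cancelling the invertible `T j` (resp. the scalar `t j`)
leaves `Φs j = Φ`.
-/

section CompletelyPositive

variable {A H : Type*} [NormedAddCommGroup H] [InnerProductSpace ℂ H]
  [Ring A] [StarRing A] [Algebra ℂ A]

theorem IsCPMap.sum {ι : Type*} (s : Finset ι) {F : ι → A →ₗ[ℂ] H →L[ℂ] H}
    (hF : ∀ j ∈ s, IsCPMap (F j)) : IsCPMap (∑ j ∈ s, F j) := by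
  intro n a h
  simp only [LinearMap.sum_apply, _root_.sum_apply, inner_sum]
  rw [Finset.sum_congr rfl fun i _ ↦ Finset.sum_comm, Finset.sum_comm]
  exact Finset.sum_nonneg fun k hk ↦ hF k hk n a h

theorem isCPMap_sum_sub {n : ℕ} {F : Fin n → A →ₗ[ℂ] H →L[ℂ] H}
    (hF : ∀ k, IsCPMap (F k)) (j : Fin n) : IsCPMap ((∑ k, F k) - F j) := by
  rw [← Finset.sum_erase_add _ _ (Finset.mem_univ j), add_sub_cancel_right]
  exact IsCPMap.sum _ fun k _ ↦ hF k

theorem IsCPMap.smul {Φ : A →ₗ[ℂ] H →L[ℂ] H} (hΦ : IsCPMap Φ) {c : ℂ} (hc : 0 ≤ c) :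
    IsCPMap (c • Φ) := by
  intro n a h
  simp only [LinearMap.smul_apply, _root_.smul_apply, inner_smul_right, ← Finset.mul_sum]
  exact mul_nonneg hc (hΦ n a h)

theorem IsCPMap.inner_apply_star_mul_self_nonneg {Φ : A →ₗ[ℂ] H →L[ℂ] H} (hΦ : IsCPMap Φ)
    (a : A) (x : H) : 0 ≤ inner ℂ x (Φ (star a * a) x) := by
  simpa using hΦ 1 (fun _ ↦ a) (fun _ ↦ x)

variable [CompleteSpace H]

theorem IsCPMap.conjAd {Φ : A →ₗ[ℂ] H →L[ℂ] H} (hΦ : IsCPMap Φ) (T : H →L[ℂ] H) :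
    IsCPMap ((conjAd T).comp Φ) := by
  intro n a h
  simpa [_root_.conjAd, ContinuousLinearMap.star_eq_adjoint,
    ContinuousLinearMap.adjoint_inner_right] using hΦ n a (fun i ↦ T (h i))

end CompletelyPositive

section ConjAd

variable {H : Type*} [NormedAddCommGroup H] [InnerProductSpace ℂ H] [CompleteSpace H]

theorem conjAd_one : conjAd (1 : H →L[ℂ] H) = LinearMap.id := by
  ext1 X
  simp [conjAd]

theorem conjAd_injective {T : H →L[ℂ] H} (hT : IsUnit T) : Function.Injective (conjAd T) :=
  fun _ _ hXY ↦ (hT.star.mul_left_cancel (hT.mul_right_cancel hXY) :)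

theorem conjAd_comp_smulRight {A : Type*} [AddCommMonoid A] [Module ℂ A] (T : H →L[ℂ] H)
    (ψ : A →ₗ[ℂ] ℂ) (P : H →L[ℂ] H) :
    (conjAd T).comp (ψ.smulRight P) = ψ.smulRight (conjAd T P) := by
  ext1 a
  simp [conjAd]

end ConjAd

section PositiveFunctional

variable {A : Type*} [Ring A] [StarRing A] [Algebra ℂ A]

-- Only the extremality clause of purity; positivity and `ψ 1 = 1` are kept as separate hypotheses.
def IsPureFunctional (ψ : A →ₗ[ℂ] ℂ) : Prop :=
  ∀ ρ : A →ₗ[ℂ] ℂ, (∀ a : A, 0 ≤ ρ (star a * a)) → (∀ a : A, 0 ≤ (ψ - ρ) (star a * a)) →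
    ∃ t : ℝ, 0 ≤ t ∧ t ≤ 1 ∧ ρ = (t : ℂ) • ψ

variable [StarModule ℂ A]

theorem LinearMap.eq_zero_of_apply_star_mul_self_eq_zero {ρ : A →ₗ[ℂ] ℂ}
    (h : ∀ a, ρ (star a * a) = 0) : ρ = 0 := by
  refine LinearMap.ext fun a ↦ ?_
  have h1 : ρ 1 = 0 := by simpa using h 1
  have hd : ∀ d : ℂ, d * ρ (star a) + star d * ρ a = 0 := by
    intro d
    have := h (a - d • 1)
    simp only [star_sub, star_smul, star_one, sub_mul, mul_sub, smul_mul_assoc, mul_smul_comm,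
      one_mul, mul_one, map_sub, map_smul, h a, h1, smul_eq_mul] at this
    linear_combination -this
  have e1 := hd 1
  have e2 := hd Complex.I
  simp only [one_mul, star_one, Complex.star_def, Complex.conj_I] at e1 e2
  simp only [LinearMap.zero_apply]
  linear_combination (e1 + Complex.I * e2) / 2 + (ρ a - ρ (star a)) / 2 * Complex.I_sq

theorem IsPureFunctional.eq_smul_of_le_smul {ψ : A →ₗ[ℂ] ℂ} (hψ : IsPureFunctional ψ)
    (hψ1 : ψ 1 = 1) {ρ : A →ₗ[ℂ] ℂ} (hρ : ∀ a, 0 ≤ ρ (star a * a)) {c : ℂ} (hc : 0 ≤ c)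
    (hle : ∀ a, 0 ≤ (c • ψ - ρ) (star a * a)) : ρ = ρ 1 • ψ := by
  rcases hc.eq_or_lt with rfl | hc
  · suffices ρ = 0 by simp [this]
    refine LinearMap.eq_zero_of_apply_star_mul_self_eq_zero fun a ↦ le_antisymm ?_ (hρ a)
    simpa using hle a
  obtain ⟨t, -, -, ht⟩ := hψ (c⁻¹ • ρ)
    (fun a ↦ mul_nonneg (inv_nonneg.mpr hc.le) (hρ a))
    (fun a ↦ by
      have : ψ - c⁻¹ • ρ = c⁻¹ • (c • ψ - ρ) := by rw [smul_sub, inv_smul_smul₀ hc.ne']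
      rw [this]
      exact mul_nonneg (inv_nonneg.mpr hc.le) (hle a))
  have hρ' : ρ = (c * t) • ψ := by rw [mul_smul, ← ht, smul_inv_smul₀ hc.ne']
  rw [hρ']
  simp [hψ1]

end PositiveFunctional

section SmulRight

variable {A H : Type*} [NormedAddCommGroup H] [InnerProductSpace ℂ H]
  [Ring A] [StarRing A] [Algebra ℂ A] [StarModule ℂ A]

open scoped MatrixOrder in
theorem sum_apply_star_mul_mul_nonneg {ψ : A →ₗ[ℂ] ℂ} (hψ : ∀ a, 0 ≤ ψ (star a * a))
    {ι : Type*} [Fintype ι] {N : Matrix ι ι ℂ} (hN : N.PosSemidef) (a : ι → A) :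
    0 ≤ ∑ i, ∑ j, ψ (star (a i) * a j) * N i j := by
  classical
  obtain ⟨B, rfl⟩ := CStarAlgebra.nonneg_iff_eq_star_mul_self.mp hN.nonneg
  have hB : ∀ m, ψ (star (∑ i, B m i • a i) * ∑ j, B m j • a j)
      = ∑ i, ∑ j, ψ (star (a i) * a j) * (star (B m i) * B m j) := by
    intro m
    simp only [star_sum, Finset.sum_mul_sum, map_sum, star_smul, smul_mul_assoc,
      mul_smul_comm, map_smul, smul_eq_mul]
    exact Finset.sum_congr rfl fun i _ ↦ Finset.sum_congr rfl fun j _ ↦ by ring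
  calc 0 ≤ ∑ m, ψ (star (∑ i, B m i • a i) * ∑ j, B m j • a j) :=
        Finset.sum_nonneg fun m _ ↦ hψ _
    _ = ∑ m, ∑ i, ∑ j, ψ (star (a i) * a j) * (star (B m i) * B m j) :=
        Finset.sum_congr rfl fun m _ ↦ hB m
    _ = ∑ i, ∑ j, ψ (star (a i) * a j) * (star B * B) i j := by
        simp only [Matrix.mul_apply, Matrix.star_apply, Finset.mul_sum]
        rw [Finset.sum_comm]
        exact Finset.sum_congr rfl fun i _ ↦ Finset.sum_comm

theorem IsPosOp.isPositive {P : H →L[ℂ] H} (hP : IsPosOp P) : P.IsPositive := by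
  rw [ContinuousLinearMap.isPositive_iff_complex]
  intro x
  obtain ⟨r, hr, hrx⟩ := RCLike.nonneg_iff_exists_ofReal.mp (hP x)
  rw [← inner_conj_symm, ← hrx]
  simp [hr]

variable [CompleteSpace H]

theorem IsPosOp.posSemidef_inner {P : H →L[ℂ] H} (hP : IsPosOp P) {ι : Type*} [Fintype ι]
    (h : ι → H) : (Matrix.of fun i j ↦ inner ℂ (h i) (P (h j))).PosSemidef := by
  obtain ⟨R, rfl⟩ := CStarAlgebra.nonneg_iff_eq_star_mul_self.mp
    ((ContinuousLinearMap.nonneg_iff_isPositive P).mpr hP.isPositive)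
  have hgram : (Matrix.of fun i j ↦ inner ℂ (h i) ((star R * R) (h j)))
      = Matrix.gram ℂ (fun i ↦ R (h i)) := by
    ext i j
    simp [Matrix.gram, ContinuousLinearMap.star_eq_adjoint,
      ContinuousLinearMap.adjoint_inner_right]
  rw [hgram]
  exact Matrix.posSemidef_gram ℂ _

theorem isCPMap_smulRight {ψ : A →ₗ[ℂ] ℂ} (hψ : ∀ a, 0 ≤ ψ (star a * a)) {P : H →L[ℂ] H}
    (hP : IsPosOp P) : IsCPMap (ψ.smulRight P) := by
  intro n a h
  simpa [inner_smul_right] using sum_apply_star_mul_mul_nonneg hψ (hP.posSemidef_inner h) a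

end SmulRight

section Extreme

variable {A H : Type*} [NormedAddCommGroup H] [InnerProductSpace ℂ H]
  [Ring A] [StarRing A] [Algebra ℂ A] [StarModule ℂ A]

theorem eq_smulRight_of_isCPMap_sub {ψ : A →ₗ[ℂ] ℂ} (hψ : IsPureFunctional ψ) (hψ1 : ψ 1 = 1)
    {P : H →L[ℂ] H} (hP : IsPosOp P) {Ψ : A →ₗ[ℂ] H →L[ℂ] H} (hΨ : IsCPMap Ψ)
    (hle : IsCPMap (ψ.smulRight P - Ψ)) : Ψ = ψ.smulRight (Ψ 1) := by
  refine LinearMap.ext fun a ↦ ?_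
  have hvec : ∀ x : H, inner ℂ x (Ψ a x) = ψ a * inner ℂ x (Ψ 1 x) := by
    intro x
    let ρ : A →ₗ[ℂ] ℂ :=
      ((innerSL ℂ x).comp (ContinuousLinearMap.apply ℂ H x)).toLinearMap.comp Ψ
    have hρ : ∀ b, ρ b = inner ℂ x (Ψ b x) := fun b ↦ rfl
    have hρψ := hψ.eq_smul_of_le_smul hψ1 (ρ := ρ)
      (fun b ↦ hΨ.inner_apply_star_mul_self_nonneg b x) (hP x) fun b ↦ by
        simpa [hρ, inner_sub_right, inner_smul_right, mul_comm]
          using hle.inner_apply_star_mul_self_nonneg b x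
    simpa [hρ, mul_comm] using LinearMap.congr_fun hρψ a
  rw [LinearMap.smulRight_apply]
  apply ContinuousLinearMap.coe_injective
  refine (ext_inner_map _ _).mp fun x ↦ ?_
  rw [← inner_conj_symm, ← inner_conj_symm]
  simp [hvec]

variable [CompleteSpace H]

theorem smulRight_mem_CPP {ψ : A →ₗ[ℂ] ℂ} (hψpos : ∀ a, 0 ≤ ψ (star a * a)) (hψ1 : ψ 1 = 1)
    {P : H →L[ℂ] H} (hP : IsPosOp P) : ψ.smulRight P ∈ CPP P :=
  ⟨isCPMap_smulRight hψpos hP, by simp [hψ1]⟩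

theorem isPCExtreme_smulRight {ψ : A →ₗ[ℂ] ℂ} (hψpos : ∀ a, 0 ≤ ψ (star a * a))
    (hψ : IsPureFunctional ψ) (hψ1 : ψ 1 = 1) {P : H →L[ℂ] H} (hP : IsPosOp P) :
    IsPCExtreme P (ψ.smulRight P) := by
  refine ⟨smulRight_mem_CPP hψpos hψ1 hP, fun n T Φs hT hΦs _ hΦ j ↦ ⟨1, isUnit_one, ?_⟩⟩
  have hF := eq_smulRight_of_isCPMap_sub hψ hψ1 hP ((hΦs j).1.conjAd (T j))
    (hΦ ▸ isCPMap_sum_sub (fun k ↦ (hΦs k).1.conjAd (T k)) j)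
  rw [LinearMap.comp_apply, (hΦs j).2, ← conjAd_comp_smulRight] at hF
  rw [conjAd_one, LinearMap.id_comp]
  exact LinearMap.ext fun a ↦ conjAd_injective (hT j) (LinearMap.congr_fun hF a)

theorem isLinExtreme_smulRight {ψ : A →ₗ[ℂ] ℂ} (hψpos : ∀ a, 0 ≤ ψ (star a * a))
    (hψ : IsPureFunctional ψ) (hψ1 : ψ 1 = 1) {P : H →L[ℂ] H} (hP : IsPosOp P) :
    IsLinExtreme (CPP P) (ψ.smulRight P) := by
  refine ⟨smulRight_mem_CPP hψpos hψ1 hP, fun n t Φs ht hΦs _ hΦ j ↦ ?_⟩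
  have ht' : ∀ k, (0 : ℂ) ≤ t k := fun k ↦ by exact_mod_cast (ht k).1.le
  have hF := eq_smulRight_of_isCPMap_sub hψ hψ1 hP ((hΦs j).1.smul (ht' j))
    (hΦ ▸ isCPMap_sum_sub (fun k ↦ (hΦs k).1.smul (ht' k)) j)
  rw [LinearMap.smul_apply, (hΦs j).2] at hF
  have htj : (t j : ℂ) ≠ 0 := by exact_mod_cast (ht j).1.ne'
  refine smul_right_injective _ htj (hF.trans ?_)
  ext1 a
  simp only [LinearMap.smulRight_apply, LinearMap.smul_apply]
  exact smul_comm _ _ _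

end Extreme

theorem stmt4_general {A : Type*} [NormedRing A] [StarRing A] [NormedAlgebra ℂ A] [StarModule ℂ A]
    {H : Type*} [NormedAddCommGroup H] [InnerProductSpace ℂ H] [CompleteSpace H]
    (P : H →L[ℂ] H) (hP : IsPosOp P)
    (ψ : A →ₗ[ℂ] ℂ) (hψpos : ∀ a : A, 0 ≤ ψ (star a * a)) (hψ1 : ψ 1 = 1)
    (hψpure : ∀ ρ : A →ₗ[ℂ] ℂ, (∀ a : A, 0 ≤ ρ (star a * a)) →
      (∀ a : A, 0 ≤ (ψ - ρ) (star a * a)) →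
      ∃ t : ℝ, 0 ≤ t ∧ t ≤ 1 ∧ ρ = (t : ℂ) • ψ) :
    IsPCExtreme P (ψ.smulRight P) ∧ IsLinExtreme (CPP (A := A) P) (ψ.smulRight P) :=
  ⟨isPCExtreme_smulRight hψpos hψpure hψ1 hP, isLinExtreme_smulRight hψpos hψpure hψ1 hP⟩

/-- Proposition `prop-PC-ext-non-empty` (i). If `ψ` is a pure state on `A` and
`Φ(a) := ψ(a) P`, then `Φ` is both a `P`-`C*`-extreme point and a linear extreme point of
`CP^{(P)}(A, B(H))`. -/
theorem stmt4 {A : Type*} [NormedRing A] [StarRing A] [CStarRing A] [NormedAlgebra ℂ A] [StarModule ℂ A] [CompleteSpace A]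
    {H : Type*} [NormedAddCommGroup H] [InnerProductSpace ℂ H] [CompleteSpace H]
    (P : H →L[ℂ] H) (hP : IsPosOp P)
    (ψ : A →ₗ[ℂ] ℂ) (hψpos : ∀ a : A, 0 ≤ ψ (star a * a)) (hψ1 : ψ 1 = 1)
    (hψpure : ∀ ρ : A →ₗ[ℂ] ℂ, (∀ a : A, 0 ≤ ρ (star a * a)) →
      (∀ a : A, 0 ≤ (ψ - ρ) (star a * a)) →
      ∃ t : ℝ, 0 ≤ t ∧ t ≤ 1 ∧ ρ = (t : ℂ) • ψ) :
    IsPCExtreme P (ψ.smulRight P) ∧ IsLinExtreme (CPP (A := A) P) (ψ.smulRight P) :=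
  stmt4_general P hP ψ hψpos hψ1 hψpure

end
end

section
/- Let H be a finite-dimensional complex Hilbert space, P ∈ B(H) positive with P ≠ 0 and ker P ≠ {0}, and let H_0 be the range of P. If T ∈ B(H) is invertible and T* P T ≤ β·P for some scalar β ∈ (0,∞), then T maps H_0^⊥ into H_0^⊥, and the compression of T to H_0 (i.e., the operator H_0 → H_0 given by x ↦ Q T x, where Q is the orthogonal projection onto H_0) is invertible in B(H_0). -/
/-!
Write `P = S* S`; then `⟪x, P x⟫ = ‖S x‖²`, so `⟪x, P x⟫ = 0` forces `P x = 0`, and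
`H₀ᗮ = ker P` since `P` is self-adjoint. For `x ∈ ker P`,
`0 ≤ ⟪T x, P T x⟫ = ⟪x, T* P T x⟫ ≤ β ⟪x, P x⟫ = 0`, so `T x ∈ ker P`.
Being injective, `T` maps the finite-dimensional space `H₀ᗮ` onto itself. Hence if `z ∈ H₀`
and `Q T z = 0`, then `T z = T w` for some `w ∈ H₀ᗮ`, so `z = w ∈ H₀ ⊓ H₀ᗮ = 0`: the compression
is injective, hence invertible.
-/

open scoped ComplexOrder

noncomputable section

section Compress

variable {A H : Type*} [NormedAddCommGroup H] [InnerProductSpace ℂ H]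

/-- Compression `X ↦ Q X|_K` of an operator on `H` to an operator on the subspace `K`. -/
def compressOp (K : Submodule ℂ H) [K.HasOrthogonalProjection] (X : H →L[ℂ] H) : K →L[ℂ] K :=
  K.orthogonalProjectionOnto.comp (X.comp K.subtypeL)

variable [Ring A] [StarRing A] [Algebra ℂ A]

/-- Compression of a linear map `Φ : A → B(H)` to a linear map `A → B(K)`. -/
def compressCP (K : Submodule ℂ H) [K.HasOrthogonalProjection] (Φ : A →ₗ[ℂ] (H →L[ℂ] H)) :
    A →ₗ[ℂ] (K →L[ℂ] K) where
  toFun a := compressOp K (Φ a)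
  map_add' a b := by
    simp [compressOp, ContinuousLinearMap.add_comp, ContinuousLinearMap.comp_add]
  map_smul' c a := by
    simp [compressOp, ContinuousLinearMap.smul_comp, ContinuousLinearMap.comp_smulₛₗ]

end Compress

open ContinuousLinearMap

section

variable {H : Type*} [NormedAddCommGroup H] [InnerProductSpace ℂ H]

lemma IsPosOp.nonneg {P : H →L[ℂ] H} (hP : IsPosOp P) : 0 ≤ P := by
  rw [nonneg_iff_isPositive, isPositive_iff_complex]
  intro x
  have hx := hP x
  rw [← inner_conj_symm, Complex.nonneg_iff, Complex.conj_re, Complex.conj_im] at hx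
  exact ⟨Complex.ext (by simp) (by simp only [RCLike.re_to_complex, Complex.ofReal_im]; linarith),
    hx.1⟩

variable [CompleteSpace H]

lemma ContinuousLinearMap.apply_eq_zero_of_inner_apply_self_eq_zero {P : H →L[ℂ] H}
    (hP : 0 ≤ P) {x : H} (hx : inner ℂ x (P x) = 0) : P x = 0 := by
  obtain ⟨S, rfl⟩ := CStarAlgebra.nonneg_iff_eq_star_mul_self.mp hP
  have hSx : S x = 0 := by
    rw [← inner_self_eq_zero (𝕜 := ℂ)]
    simpa [star_eq_adjoint, adjoint_inner_right] using hx
  simp [hSx]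

lemma ContinuousLinearMap.orthogonal_range_eq_ker_of_nonneg {P : H →L[ℂ] H} (hP : 0 ≤ P) :
    (LinearMap.range (P : H →ₗ[ℂ] H))ᗮ = LinearMap.ker (P : H →ₗ[ℂ] H) :=
  (IsSelfAdjoint.of_nonneg hP).isStarNormal.orthogonal_range

lemma ContinuousLinearMap.apply_apply_eq_zero_of_star_mul_mul_le {P T : H →L[ℂ] H} (hP : 0 ≤ P)
    {c : ℂ} (h : star T * P * T ≤ c • P) {x : H} (hx : P x = 0) : P (T x) = 0 := by
  refine apply_eq_zero_of_inner_apply_self_eq_zero hP ?_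
  have hle : inner ℂ (T x) (P (T x)) ≤ 0 := by
    simpa [hx, star_eq_adjoint, adjoint_inner_right] using
      ((le_def _ _).mp h).inner_nonneg_right x
  exact le_antisymm hle (((nonneg_iff_isPositive P).mp hP).inner_nonneg_right (T x))

end

lemma Submodule.map_eq_of_injective_of_map_le {K V : Type*} [DivisionRing K] [AddCommGroup V]
    [Module K V] [FiniteDimensional K V] {f : V →ₗ[K] V} (hf : Function.Injective f)
    {W : Submodule K V} (hW : W.map f ≤ W) : W.map f = W :=
  eq_of_le_of_finrank_eq hW (LinearEquiv.finrank_eq (equivMapOfInjective f hf W)).symm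

lemma isUnit_compressOp_of_mapsTo_orthogonal {H : Type*} [NormedAddCommGroup H]
    [InnerProductSpace ℂ H] [FiniteDimensional ℂ H] (K : Submodule ℂ H) {T : H →L[ℂ] H}
    (hT : Function.Injective T) (hTK : ∀ x ∈ Kᗮ, T x ∈ Kᗮ) : IsUnit (compressOp K T) := by
  have hmap : Kᗮ.map (T : H →ₗ[ℂ] H) = Kᗮ :=
    Submodule.map_eq_of_injective_of_map_le hT (Submodule.map_le_iff_le_comap.mpr hTK)
  rw [isUnit_iff_isUnit_toLinearMap, LinearMap.isUnit_iff_ker_eq_bot, LinearMap.ker_eq_bot']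
  intro z hz
  have hTz : T z ∈ Kᗮ := by simpa [compressOp] using hz
  obtain ⟨w, hw, hwz⟩ := hmap.symm ▸ hTz
  have hz_mem : (z : H) ∈ K ⊓ Kᗮ := ⟨z.2, hT hwz ▸ hw⟩
  rw [Submodule.inf_orthogonal_eq_bot] at hz_mem
  exact Subtype.ext hz_mem

theorem stmt8_general {H : Type*} [NormedAddCommGroup H] [InnerProductSpace ℂ H] [CompleteSpace H] [FiniteDimensional ℂ H]
    (P T : H →L[ℂ] H) (hP : IsPosOp P)
    (hT : IsUnit T)
    (β : ℝ)
    (h2 : IsPosOp ((β : ℂ) • P - star T * P * T)) :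
    (∀ x ∈ (LinearMap.range (P : H →ₗ[ℂ] H))ᗮ, T x ∈ (LinearMap.range (P : H →ₗ[ℂ] H))ᗮ) ∧
    IsUnit (compressOp (LinearMap.range (P : H →ₗ[ℂ] H)) T) := by
  have hP₀ : 0 ≤ P := hP.nonneg
  have hTPT : star T * P * T ≤ (β : ℂ) • P := sub_nonneg.mp h2.nonneg
  have hT_invariant : ∀ x ∈ (LinearMap.range (P : H →ₗ[ℂ] H))ᗮ,
      T x ∈ (LinearMap.range (P : H →ₗ[ℂ] H))ᗮ := by
    simp only [orthogonal_range_eq_ker_of_nonneg hP₀, LinearMap.mem_ker, coe_coe]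
    exact fun x hx => apply_apply_eq_zero_of_star_mul_mul_le hP₀ hTPT hx
  exact ⟨hT_invariant, isUnit_compressOp_of_mapsTo_orthogonal _ (isUnit_iff_bijective.mp hT).1 hT_invariant⟩

/-- Corollary `cor-invertible-conjugate-positive-inequality`. In finite
dimensions: if `T` is invertible with `T* P T ≤ β P` for some `β > 0`, where `P ≥ 0`, `P ≠ 0`,
`ker P ≠ 0`, and `K` is the range of `P`, then `T` maps `Kᗮ` into `Kᗮ` and the compression of
`T` to `K` is invertible in `B(K)`. -/
theorem stmt8 {H : Type*} [NormedAddCommGroup H] [InnerProductSpace ℂ H] [CompleteSpace H] [FiniteDimensional ℂ H]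
    (P T : H →L[ℂ] H) (hP : IsPosOp P) (hP0 : P ≠ 0) (hker : LinearMap.ker (P : H →ₗ[ℂ] H) ≠ ⊥)
    (hT : IsUnit T)
    (β : ℝ) (hβ : 0 < β)
    (h2 : IsPosOp ((β : ℂ) • P - star T * P * T)) :
    (∀ x ∈ (LinearMap.range (P : H →ₗ[ℂ] H))ᗮ, T x ∈ (LinearMap.range (P : H →ₗ[ℂ] H))ᗮ) ∧
    IsUnit (compressOp (LinearMap.range (P : H →ₗ[ℂ] H)) T) :=
  stmt8_general P T hP hT β h2

end
end
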